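/- Every (K_r, 2P_2)-free graph is r(r-1)/2-colourable (Wagon's theorem). That is, if a graph contains no clique on r vertices and no induced subgraph isomorphic to the disjoint union of two edges, then its chromatic number is at most r(r-1)/2. -/
import Mathlib

def twoP2 : SimpleGraph (Fin 4) :=
  SimpleGraph.fromEdgeSet {s(0, 1), s(2, 3)}

lemma no2P2 {V : Type*} {G : SimpleGraph V}
    (h2P2 : IsEmpty (twoP2 ↪g G)) {a b c d : V}
    (hab : G.Adj a b) (hcd : G.Adj c d)
    (h1 : ¬G.Adj a c) (h2 : ¬G.Adj a d) (h3 : ¬G.Adj b c) (h4 : ¬G.Adj b d)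
    (hac : a ≠ c) (had : a ≠ d) (hbc : b ≠ c) (hbd : b ≠ d) : False := by
  apply h2P2.false
  have h1' : ¬G.Adj c a := fun h => h1 h.symm
  have h2' : ¬G.Adj d a := fun h => h2 h.symm
  have h3' : ¬G.Adj c b := fun h => h3 h.symm
  have h4' : ¬G.Adj d b := fun h => h4 h.symm
  have hinj : Function.Injective ![a, b, c, d] := by
    intro i j h
    fin_cases i <;> fin_cases j <;>
      simp_all [hab.ne, hcd.ne, hab.ne', hcd.ne', hac, had, hbc, hbd,
        hac.symm, had.symm, hbc.symm, hbd.symm]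
  refine ⟨⟨![a, b, c, d], hinj⟩, ?_⟩
  intro i j
  fin_cases i <;> fin_cases j <;>
    simp [twoP2, SimpleGraph.fromEdgeSet_adj, Sym2.eq_iff, hab, hcd, hab.symm, hcd.symm,
      h1, h2, h3, h4, h1', h2', h3', h4', G.irrefl]

/-- Wagon's theorem: every `(K_r, 2P_2)`-free graph is `r(r-1)/2`-colourable. -/
theorem stmt5 {V : Type*} [Fintype V] (G : SimpleGraph V) (r : ℕ)
    (hK : G.CliqueFree r)
    (h2P2 : IsEmpty (twoP2 ↪g G)) :
    G.Colorable (r * (r - 1) / 2) := by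
  classical
  rcases Nat.eq_zero_or_pos r with rfl | hr
  · exact absurd (SimpleGraph.isNClique_empty.mpr rfl) (hK ∅)
  obtain ⟨s, hs⟩ := G.exists_isNClique_cliqueNum
  set k := G.cliqueNum with hkdef
  have hmax : ∀ t : Finset V, G.IsClique t → t.card ≤ k := fun t ht =>
    SimpleGraph.IsClique.card_le_cliqueNum (tc := ht)
  have hkr : k < r := by
    by_contra h
    push_neg at h
    obtain ⟨t, hts, htcard⟩ : ∃ t ⊆ s, t.card = r :=
      Finset.exists_subset_card_eq (by rw [hs.2]; exact h)
    exact hK t ⟨hs.1.subset hts, htcard⟩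
  -- enumerate the maximum clique
  let x : Fin k → V := fun i => (s.equivFin.symm (Fin.cast hs.2.symm i) : V)
  have hxinj : Function.Injective x := fun i j h => by
    have := s.equivFin.symm.injective (Subtype.ext h)
    simpa [Fin.ext_iff] using congrArg Fin.val this
  have hxmem : ∀ i, x i ∈ s := fun i => (s.equivFin.symm (Fin.cast hs.2.symm i)).2
  have hxsurj : ∀ v ∈ s, ∃ i, x i = v := by
    intro v hv
    refine ⟨Fin.cast hs.2 (s.equivFin ⟨v, hv⟩), ?_⟩
    simp [x]
  have hadjx : ∀ i j, i ≠ j → G.Adj (x i) (x j) := fun i j hij =>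
    hs.1 (hxmem i) (hxmem j) (fun h => hij (hxinj h))
  -- the set of clique indices a vertex misses
  let T : V → Finset (Fin k) := fun v => Finset.univ.filter (fun i => ¬ G.Adj v (x i))
  have hmemT : ∀ v i, i ∈ T v ↔ ¬ G.Adj v (x i) := by
    intro v i; simp [T]
  have hTne : ∀ v, (T v).Nonempty := by
    intro v
    rw [Finset.nonempty_iff_ne_empty]
    intro hemp
    have hadjall : ∀ i, G.Adj v (x i) := by
      intro i
      by_contra hcon
      exact Finset.notMem_empty i (hemp ▸ (hmemT v i).mpr hcon)
    have hvs : v ∉ s := by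
      intro hv
      obtain ⟨i, hi⟩ := hxsurj v hv
      exact G.irrefl (hi ▸ hadjall i)
    have hclique : G.IsClique (insert v s : Finset V) := by
      intro a ha b hb hab
      simp only [Finset.coe_insert, Set.mem_insert_iff, Finset.mem_coe] at ha hb
      rcases ha with rfl | ha <;> rcases hb with rfl | hb
      · exact absurd rfl hab
      · obtain ⟨i, rfl⟩ := hxsurj b hb; exact hadjall i
      · obtain ⟨i, rfl⟩ := hxsurj a ha; exact (hadjall i).symm
      · exact hs.1 ha hb hab
    have := hmax _ hclique
    rw [Finset.card_insert_of_notMem hvs, hs.2] at this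
    omega
  let i₀ : V → Fin k := fun v => (T v).min' (hTne v)
  let j₀ : V → Fin k := fun v =>
    if h : ((T v).erase (i₀ v)).Nonempty then ((T v).erase (i₀ v)).min' h else i₀ v
  have hi₀T : ∀ v, i₀ v ∈ T v := fun v => (T v).min'_mem (hTne v)
  have hj₀T : ∀ v, j₀ v ∈ T v := by
    intro v
    by_cases h : ((T v).erase (i₀ v)).Nonempty
    · simpa [j₀, h] using Finset.mem_of_mem_erase (((T v).erase (i₀ v)).min'_mem h)
    · simpa [j₀, h] using hi₀T v
  have hsingle : ∀ v, j₀ v = i₀ v → T v = {i₀ v} := by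
    intro v hv
    by_cases h : ((T v).erase (i₀ v)).Nonempty
    · exfalso
      have : j₀ v ∈ (T v).erase (i₀ v) := by simpa [j₀, h] using ((T v).erase (i₀ v)).min'_mem h
      exact (Finset.ne_of_mem_erase this) hv
    · rw [Finset.not_nonempty_iff_eq_empty] at h
      apply Finset.eq_singleton_iff_unique_mem.mpr
      refine ⟨hi₀T v, fun a ha => ?_⟩
      by_contra hne
      exact Finset.notMem_empty a (h ▸ Finset.mem_erase.mpr ⟨hne, ha⟩)
  -- helper for the singleton case
  have hsingleAdj : ∀ v i, T v = {i} → ∀ j, j ≠ i → G.Adj v (x j) := by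
    intro v i hTv j hj
    by_contra hcon
    have := (hmemT v j).mpr hcon
    rw [hTv, Finset.mem_singleton] at this
    exact hj this
  -- the coloring is proper
  have valid : ∀ {u v : V}, G.Adj u v → s(i₀ u, j₀ u) ≠ s(i₀ v, j₀ v) := by
    intro u v huv heq
    rw [Sym2.eq_iff] at heq
    by_cases hij : i₀ u = j₀ u
    · -- both T u and T v are the singleton {i₀ u}
      set i := i₀ u with hidef
      have hTu : T u = {i} := hsingle u hij.symm
      have hTv : T v = {i} := by
        rcases heq with ⟨h1, h2⟩ | ⟨h1, h2⟩
        · have hji : j₀ v = i₀ v := by rw [← h2, ← hij]; exact h1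
          rw [hsingle v hji, ← h1]
        · have hji : j₀ v = i₀ v := by rw [← h1, hij]; exact h2
          rw [hsingle v hji, ← h2, ← hij]
      have hadju := hsingleAdj u i hTu
      have hadjv := hsingleAdj v i hTv
      have hunotin : u ∉ insert v (s.erase (x i)) := by
        simp only [Finset.mem_insert, Finset.mem_erase]
        rintro (rfl | ⟨hne, hmem⟩)
        · exact G.irrefl huv
        · obtain ⟨j, rfl⟩ := hxsurj u hmem
          exact G.irrefl (hadju j (fun h => hne (congrArg x h)))
      have hvnotin : v ∉ s.erase (x i) := by
        simp only [Finset.mem_erase]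
        rintro ⟨hne, hmem⟩
        obtain ⟨j, rfl⟩ := hxsurj v hmem
        exact G.irrefl (hadjv j (fun h => hne (congrArg x h)))
      have hclique : G.IsClique (insert u (insert v (s.erase (x i))) : Finset V) := by
        intro a ha b hb hab
        simp only [Finset.coe_insert, Set.mem_insert_iff, Finset.mem_coe,
          Finset.mem_erase] at ha hb
        rcases ha with rfl | rfl | ⟨hane, hamem⟩
        · rcases hb with rfl | rfl | ⟨hbne, hbmem⟩
          · exact absurd rfl hab
          · exact huv
          · obtain ⟨j, rfl⟩ := hxsurj b hbmem
            exact hadju j (fun h => hbne (congrArg x h))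
        · rcases hb with rfl | rfl | ⟨hbne, hbmem⟩
          · exact huv.symm
          · exact absurd rfl hab
          · obtain ⟨j, rfl⟩ := hxsurj b hbmem
            exact hadjv j (fun h => hbne (congrArg x h))
        · rcases hb with rfl | rfl | ⟨hbne, hbmem⟩
          · obtain ⟨j, rfl⟩ := hxsurj a hamem
            exact (hadju j (fun h => hane (congrArg x h))).symm
          · obtain ⟨j, rfl⟩ := hxsurj a hamem
            exact (hadjv j (fun h => hane (congrArg x h))).symm
          · exact hs.1 hamem hbmem hab
      have hle := hmax _ hclique
      rw [Finset.card_insert_of_notMem hunotin, Finset.card_insert_of_notMem hvnotin,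
        Finset.card_erase_of_mem (hxmem i), hs.2] at hle
      have hkpos : 0 < k := Fin.pos i
      omega
    · -- two distinct missed indices: build an induced 2P₂
      have hiu : ¬ G.Adj u (x (i₀ u)) := (hmemT u _).mp (hi₀T u)
      have hju : ¬ G.Adj u (x (j₀ u)) := (hmemT u _).mp (hj₀T u)
      have hiv : ¬ G.Adj v (x (i₀ u)) := by
        rcases heq with ⟨h1, h2⟩ | ⟨h1, h2⟩
        · rw [h1]; exact (hmemT v _).mp (hi₀T v)
        · rw [h1]; exact (hmemT v _).mp (hj₀T v)
      have hjv : ¬ G.Adj v (x (j₀ u)) := by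
        rcases heq with ⟨h1, h2⟩ | ⟨h1, h2⟩
        · rw [h2]; exact (hmemT v _).mp (hj₀T v)
        · rw [h2]; exact (hmemT v _).mp (hi₀T v)
      have hxx := hadjx (i₀ u) (j₀ u) hij
      have hac : x (i₀ u) ≠ u := by intro h; have := hxx; rw [h] at this; exact hju this
      have had : x (i₀ u) ≠ v := by intro h; have := hxx; rw [h] at this; exact hjv this
      have hbc : x (j₀ u) ≠ u := by intro h; have := hxx.symm; rw [h] at this; exact hiu this
      have hbd : x (j₀ u) ≠ v := by intro h; have := hxx.symm; rw [h] at this; exact hiv this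
      exact no2P2 h2P2 hxx huv
        (fun h => hiu h.symm) (fun h => hiv h.symm) (fun h => hju h.symm) (fun h => hjv h.symm)
        hac had hbc hbd
  have C : G.Coloring (Sym2 (Fin k)) := SimpleGraph.Coloring.mk (fun v => s(i₀ v, j₀ v)) valid
  have hcol := C.colorable
  have hcard : Fintype.card (Sym2 (Fin k)) = (k + 1).choose 2 := by
    rw [Sym2.card, Fintype.card_fin]
  rw [hcard] at hcol
  refine hcol.mono ?_
  rw [← Nat.choose_two_right]
  exact Nat.choose_le_choose 2 hkr
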